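/- Let μ be a non-atomic finite measure on a measurable space (T, Σ) and θ a Young function satisfying the Δ₂-condition. Define the modular B(f) = ∫_T θ(|f(t)|) dμ(t) and the Luxemburg norm ‖f‖_θ for measurable f : T → ℝ. Then the Luxemburg norm is locally uniformly convex — i.e. for every measurable f with ‖f‖_θ = 1 and every ε > 0 there exists δ ∈ (0,1) such that every measurable g with ‖g‖_θ = 1 and ‖f − g‖_θ ≥ ε satisfies ‖(f+g)/2‖_θ ≤ 1 − δ — if and only if the modular B is locally uniformly convex — i.e. for every measurable f with B(f) = 1 and every ε > 0 there exists δ ∈ (0,1) such that every measurable g with B(g) = 1 and B(f − g) ≥ ε satisfies B((f+g)/2) ≤ 1 − δ. -/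

import Mathlib

open MeasureTheory Filter Set

/-- A Young function: `θ u = ∫₀ᵘ χ(t) dt` for some non-decreasing, left-continuous
`χ : [0,∞) → [0,∞)` with `χ 0 = 0` which is not identically zero. -/
def IsYoungFunction (θ : ℝ → ℝ) : Prop :=
  ∃ χ : ℝ → ℝ,
    (∀ t, 0 ≤ t → 0 ≤ χ t) ∧
    (∀ s t, 0 ≤ s → s ≤ t → χ s ≤ χ t) ∧
    (∀ t, 0 < t → Tendsto χ (nhdsWithin t (Set.Iio t)) (nhds (χ t))) ∧
    χ 0 = 0 ∧
    (∃ t, 0 ≤ t ∧ χ t ≠ 0) ∧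
    (∀ u, 0 ≤ u → θ u = ∫ t in (0:ℝ)..u, χ t)

/-- The Δ₂-condition: there is `k > 0` with `θ(2t) ≤ k·θ(t)` for all `t ≥ 0`. -/
def Delta2 (θ : ℝ → ℝ) : Prop :=
  ∃ k : ℝ, 0 < k ∧ ∀ t, 0 ≤ t → θ (2 * t) ≤ k * θ t

/-- The Luxemburg norm of `f` with respect to the Young function `θ` and the measure
`μ` : `inf {k > 0 : ∫ θ(‖f‖/k) dμ ≤ 1}`. -/
noncomputable def luxNorm {T X : Type*} [MeasurableSpace T] [NormedAddCommGroup X]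
    (θ : ℝ → ℝ) (μ : Measure T) (f : T → X) : ENNReal :=
  sInf {k : ENNReal | 0 < k ∧ k ≠ ⊤ ∧
    ∫⁻ t, ENNReal.ofReal (θ (‖f t‖ / k.toReal)) ∂μ ≤ 1}

/-! By convexity of `θ` and `Δ₂`, `θ (l s) ≤ (1 + (l - 1) k) θ s` for `l ∈ [1, 2]`, so the
modular `B` changes uniformly under rescaling near the unit sphere. Consequently
`‖u‖ = 1 ↔ B(u) = 1`; `B(u) ≤ 1 - δ` forces `‖u‖ ≤ 1 - δ'`, while `‖u‖ < r ≤ 1` forces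
`B(u) < r`; and distances transfer uniformly: `B(u) ≥ ε` gives `‖u‖ ≥ min ε 1`, and
`‖u‖ ≥ ε` gives `B(u) ≥ k⁻ᵐ` once `2ᵐ ε > 2`. With these, the `δ` of either local uniform
convexity yields a `δ` for the other. -/

open scoped ENNReal Topology

section RealFunctions

variable {χ θ : ℝ → ℝ} {a b k s : ℝ}

lemma MonotoneOn.mul_le_intervalIntegral (hχ : MonotoneOn χ (Icc a b)) (hab : a ≤ b) :
    (b - a) * χ a ≤ ∫ t in a..b, χ t := by
  have hint : IntervalIntegrable χ volume a b := (uIcc_of_le hab ▸ hχ).intervalIntegrable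
  simpa using intervalIntegral.integral_mono_on hab intervalIntegrable_const hint
    fun t ht => hχ (left_mem_Icc.2 hab) ht ht.1

lemma MonotoneOn.intervalIntegral_le_mul (hχ : MonotoneOn χ (Icc a b)) (hab : a ≤ b) :
    ∫ t in a..b, χ t ≤ (b - a) * χ b := by
  have hint : IntervalIntegrable χ volume a b := (uIcc_of_le hab ▸ hχ).intervalIntegrable
  simpa using intervalIntegral.integral_mono_on hab hint intervalIntegrable_const
    fun t ht => hχ ht (right_mem_Icc.2 hab) ht.2

lemma MonotoneOn.convexOn_intervalIntegral (hχ : MonotoneOn χ (Ici 0)) :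
    ConvexOn ℝ (Ici 0) fun u => ∫ t in (0 : ℝ)..u, χ t := by
  have hint : ∀ {x y : ℝ}, 0 ≤ x → 0 ≤ y → IntervalIntegrable χ volume x y := fun hx hy =>
    (hχ.mono fun t ht => le_trans (le_min hx hy) ht.1).intervalIntegrable
  refine convexOn_of_slope_mono_adjacent (convex_Ici 0) fun {x y z} hx hz hxy hyz => ?_
  have hy : 0 ≤ y := le_trans hx hxy.le
  rw [intervalIntegral.integral_interval_sub_left (hint le_rfl hy) (hint le_rfl hx),
    intervalIntegral.integral_interval_sub_left (hint le_rfl hz) (hint le_rfl hy)]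
  calc (∫ t in x..y, χ t) / (y - x) ≤ χ y := by
        rw [div_le_iff₀ (sub_pos.2 hxy), mul_comm]
        exact (hχ.mono fun t ht => le_trans hx ht.1).intervalIntegral_le_mul hxy.le
    _ ≤ (∫ t in y..z, χ t) / (z - y) := by
        rw [le_div_iff₀ (sub_pos.2 hyz), mul_comm]
        exact (hχ.mono fun t ht => le_trans hy ht.1).mul_le_intervalIntegral hyz.le

namespace IsYoungFunction

lemma map_zero (hθ : IsYoungFunction θ) : θ 0 = 0 := by
  obtain ⟨χ, -, -, -, -, -, hθχ⟩ := hθ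
  simp [hθχ 0 le_rfl]

lemma nonneg (hθ : IsYoungFunction θ) (hs : 0 ≤ s) : 0 ≤ θ s := by
  obtain ⟨χ, hχ0, -, -, -, -, hθχ⟩ := hθ
  rw [hθχ s hs]
  exact intervalIntegral.integral_nonneg hs fun t ht => hχ0 t ht.1

lemma convexOn (hθ : IsYoungFunction θ) : ConvexOn ℝ (Ici 0) θ := by
  obtain ⟨χ, -, hχ, -, -, -, hθχ⟩ := hθ
  exact (MonotoneOn.convexOn_intervalIntegral fun s hs t _ hst => hχ s t hs hst).congr
    fun u hu => (hθχ u hu).symm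

end IsYoungFunction

lemma ConvexOn.map_mul_le (hθ : ConvexOn ℝ (Ici 0) θ) (hθ0 : θ 0 = 0) (ha0 : 0 ≤ a)
    (ha1 : a ≤ 1) (hs : 0 ≤ s) : θ (a * s) ≤ a * θ s := by
  simpa [hθ0] using hθ.2 hs (self_mem_Ici : (0 : ℝ) ∈ Ici 0) ha0 (sub_nonneg.2 ha1)
    (add_sub_cancel a 1)

/-- `a s` is the convex combination `(2 - a) s + (a - 1) (2 s)`. -/
lemma ConvexOn.map_mul_le_of_delta2 (hθ : ConvexOn ℝ (Ici 0) θ) (hθs : 0 ≤ θ s)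
    (hΔ : ∀ t, 0 ≤ t → θ (2 * t) ≤ k * θ t) (ha1 : 1 ≤ a) (ha2 : a ≤ 2) (hs : 0 ≤ s) :
    θ (a * s) ≤ (1 + (a - 1) * k) * θ s := by
  have hconv := hθ.2 hs (by simpa using mul_nonneg zero_le_two hs : 2 * s ∈ Ici 0)
    (sub_nonneg.2 ha2) (sub_nonneg.2 ha1) (by ring)
  simp only [smul_eq_mul] at hconv
  calc θ (a * s) = θ ((2 - a) * s + (a - 1) * (2 * s)) := by ring_nf
    _ ≤ (2 - a) * θ s + (a - 1) * θ (2 * s) := hconv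
    _ ≤ (2 - a) * θ s + (a - 1) * (k * θ s) :=
        add_le_add_right (mul_le_mul_of_nonneg_left (hΔ s hs) (sub_nonneg.2 ha1)) _
    _ ≤ (1 + (a - 1) * k) * θ s := by nlinarith

lemma map_two_pow_mul_le_of_delta2 (hk : 0 ≤ k) (hΔ : ∀ t, 0 ≤ t → θ (2 * t) ≤ k * θ t)
    (m : ℕ) (hs : 0 ≤ s) : θ (2 ^ m * s) ≤ k ^ m * θ s := by
  induction m with
  | zero => simp
  | succ m ih =>
    calc θ (2 ^ (m + 1) * s) = θ (2 * (2 ^ m * s)) := by ring_nf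
      _ ≤ k * θ (2 ^ m * s) := hΔ _ (by positivity)
      _ ≤ k * (k ^ m * θ s) := mul_le_mul_of_nonneg_left ih hk
      _ = k ^ (m + 1) * θ s := by ring

lemma ConvexOn.map_mul_le_pow_of_delta2 (hθ : ConvexOn ℝ (Ici 0) θ) (hθ0 : θ 0 = 0)
    (hθnn : ∀ s, 0 ≤ s → 0 ≤ θ s) (hk : 0 ≤ k) (hΔ : ∀ t, 0 ≤ t → θ (2 * t) ≤ k * θ t)
    {m : ℕ} (ha0 : 0 ≤ a) (ha : a ≤ 2 ^ m) (hs : 0 ≤ s) : θ (a * s) ≤ k ^ m * θ s := by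
  have h2m : (0 : ℝ) < 2 ^ m := by positivity
  calc θ (a * s) = θ (a / 2 ^ m * (2 ^ m * s)) := by field_simp
    _ ≤ a / 2 ^ m * θ (2 ^ m * s) :=
        hθ.map_mul_le hθ0 (by positivity) ((div_le_one h2m).2 ha) (by positivity)
    _ ≤ θ (2 ^ m * s) := mul_le_of_le_one_left (hθnn _ (by positivity)) ((div_le_one h2m).2 ha)
    _ ≤ k ^ m * θ s := map_two_pow_mul_le_of_delta2 hk hΔ m hs

end RealFunctions

section Modular

variable {T : Type*} [MeasurableSpace T] {μ : Measure T} {θ : ℝ → ℝ} {u : T → ℝ} {k r : ℝ}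

/-- The modular `B(u) = ∫ θ(|u|) dμ`. -/
noncomputable def orliczModular (θ : ℝ → ℝ) (μ : Measure T) (u : T → ℝ) : ℝ≥0∞ :=
  ∫⁻ t, ENNReal.ofReal (θ |u t|) ∂μ

/-- Local uniform convexity of `F` at every point of its unit sphere, among measurable
functions, with distances measured by `F` itself. -/
def LocallyUniformlyConvex (F : (T → ℝ) → ℝ≥0∞) : Prop :=
  ∀ f : T → ℝ, Measurable f → F f = 1 →
    ∀ ε : ℝ, 0 < ε → ∃ δ : ℝ, 0 < δ ∧ δ < 1 ∧
      ∀ g : T → ℝ, Measurable g → F g = 1 →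
        ENNReal.ofReal ε ≤ F (fun t => f t - g t) →
        F (fun t => (f t + g t) / 2) ≤ ENNReal.ofReal (1 - δ)

lemma orliczModular_smul_le {a b : ℝ} (ha : 0 ≤ a) (hb : 0 ≤ b)
    (h : ∀ s, 0 ≤ s → θ (a * s) ≤ b * θ s) (u : T → ℝ) :
    orliczModular θ μ (a • u) ≤ ENNReal.ofReal b * orliczModular θ μ u := by
  rw [orliczModular, orliczModular, ← lintegral_const_mul' _ _ ENNReal.ofReal_ne_top]
  refine lintegral_mono fun t => ?_
  rw [← ENNReal.ofReal_mul hb, Pi.smul_apply, smul_eq_mul, abs_mul, abs_of_nonneg ha]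
  exact ENNReal.ofReal_le_ofReal (h _ (abs_nonneg _))

lemma luxNorm_le_ofReal (hr : 0 < r) (h : orliczModular θ μ (r⁻¹ • u) ≤ 1) :
    luxNorm θ μ u ≤ ENNReal.ofReal r := by
  refine sInf_le ⟨ENNReal.ofReal_pos.2 hr, ENNReal.ofReal_ne_top, ?_⟩
  simpa [orliczModular, ENNReal.toReal_ofReal hr.le, abs_mul, abs_of_pos hr,
    div_eq_inv_mul] using h

lemma exists_orliczModular_inv_smul_le_one_of_luxNorm_lt
    (h : luxNorm θ μ u < ENNReal.ofReal r) :
    ∃ c, 0 < c ∧ c < r ∧ orliczModular θ μ (c⁻¹ • u) ≤ 1 := by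
  obtain ⟨c, ⟨hc0, hctop, hc⟩, hcr⟩ := sInf_lt_iff.1 h
  refine ⟨c.toReal, ENNReal.toReal_pos hc0.ne' hctop, ENNReal.toReal_lt_of_lt_ofReal hcr, ?_⟩
  simpa [orliczModular, abs_mul, div_eq_inv_mul] using hc

lemma orliczModular_lt_of_luxNorm_lt (hθ : ConvexOn ℝ (Ici 0) θ) (hθ0 : θ 0 = 0)
    (hr : r ≤ 1) (h : luxNorm θ μ u < ENNReal.ofReal r) :
    orliczModular θ μ u < ENNReal.ofReal r := by
  obtain ⟨c, hc0, hcr, hc⟩ := exists_orliczModular_inv_smul_le_one_of_luxNorm_lt h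
  calc orliczModular θ μ u = orliczModular θ μ (c • c⁻¹ • u) := by rw [smul_inv_smul₀ hc0.ne']
    _ ≤ ENNReal.ofReal c * orliczModular θ μ (c⁻¹ • u) :=
        orliczModular_smul_le hc0.le hc0.le
          (fun s hs => hθ.map_mul_le hθ0 hc0.le (by linarith) hs) _
    _ ≤ ENNReal.ofReal c := mul_le_of_le_one_right' hc
    _ < ENNReal.ofReal r := (ENNReal.ofReal_lt_ofReal_iff (by linarith)).2 hcr

lemma orliczModular_inv_smul_le_one_of_luxNorm_lt (hθ : ConvexOn ℝ (Ici 0) θ)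
    (hθ0 : θ 0 = 0) (hr : 0 < r) (h : luxNorm θ μ u < ENNReal.ofReal r) :
    orliczModular θ μ (r⁻¹ • u) ≤ 1 := by
  obtain ⟨c, hc0, hcr, hc⟩ := exists_orliczModular_inv_smul_le_one_of_luxNorm_lt h
  have hcr1 : c / r ≤ 1 := (div_le_one hr).2 hcr.le
  calc orliczModular θ μ (r⁻¹ • u) = orliczModular θ μ ((c / r) • c⁻¹ • u) := by
        rw [smul_smul, div_mul_eq_mul_div, mul_inv_cancel₀ hc0.ne', one_div]
    _ ≤ ENNReal.ofReal (c / r) * orliczModular θ μ (c⁻¹ • u) :=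
        orliczModular_smul_le (by positivity) (by positivity)
          (fun s hs => hθ.map_mul_le hθ0 (by positivity) hcr1 hs) _
    _ ≤ 1 := (mul_le_of_le_one_right' hc).trans (ENNReal.ofReal_le_one.2 hcr1)

lemma luxNorm_eq_one_of_orliczModular_eq_one (hθ : ConvexOn ℝ (Ici 0) θ) (hθ0 : θ 0 = 0)
    (h : orliczModular θ μ u = 1) : luxNorm θ μ u = 1 := by
  refine le_antisymm ?_ (not_lt.1 fun hlt => ?_)
  · simpa using luxNorm_le_ofReal one_pos (by simpa using h.le)
  · have := orliczModular_lt_of_luxNorm_lt hθ hθ0 le_rfl (by simpa using hlt)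
    simp [h] at this

lemma ofReal_le_luxNorm_of_ofReal_le_orliczModular (hθ : ConvexOn ℝ (Ici 0) θ)
    (hθ0 : θ 0 = 0) (hr : r ≤ 1) (h : ENNReal.ofReal r ≤ orliczModular θ μ u) :
    ENNReal.ofReal r ≤ luxNorm θ μ u :=
  not_lt.1 fun hlt => (orliczModular_lt_of_luxNorm_lt hθ hθ0 hr hlt).not_ge h

/-- `B(u) ≤ (1 + e k) B((1 + e)⁻¹ u) ≤ 1 + e k` for every `e ∈ (0, 1]`. -/
lemma orliczModular_le_one_of_luxNorm_le_one (hθ : ConvexOn ℝ (Ici 0) θ) (hθ0 : θ 0 = 0)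
    (hθnn : ∀ s, 0 ≤ s → 0 ≤ θ s) (hk : 0 < k) (hΔ : ∀ t, 0 ≤ t → θ (2 * t) ≤ k * θ t)
    (h : luxNorm θ μ u ≤ 1) : orliczModular θ μ u ≤ 1 := by
  have hlim : Tendsto (fun e : ℝ => ENNReal.ofReal (1 + e * k)) (𝓝[>] 0) (𝓝 1) := by
    have : Tendsto (fun e : ℝ => 1 + e * k) (𝓝 0) (𝓝 1) :=
      (by fun_prop : Continuous fun e : ℝ => 1 + e * k).tendsto' 0 1 (by simp)
    simpa using (ENNReal.tendsto_ofReal this).mono_left nhdsWithin_le_nhds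
  refine ge_of_tendsto hlim (eventually_of_mem (Ioc_mem_nhdsGT one_pos) fun e ⟨he0, he1⟩ => ?_)
  have hl : luxNorm θ μ u < ENNReal.ofReal (1 + e) :=
    h.trans_lt (ENNReal.one_lt_ofReal.2 (by linarith))
  calc orliczModular θ μ u = orliczModular θ μ ((1 + e) • (1 + e)⁻¹ • u) := by
        rw [smul_inv_smul₀ (by linarith)]
    _ ≤ ENNReal.ofReal (1 + e * k) * orliczModular θ μ ((1 + e)⁻¹ • u) :=
        orliczModular_smul_le (by linarith) (by positivity) (fun s hs => by
          simpa using hθ.map_mul_le_of_delta2 (a := 1 + e) (hθnn s hs) hΔ (by linarith)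
            (by linarith) hs) _
    _ ≤ ENNReal.ofReal (1 + e * k) := mul_le_of_le_one_right'
        (orliczModular_inv_smul_le_one_of_luxNorm_lt hθ hθ0 (by linarith) hl)

lemma exists_luxNorm_le_of_orliczModular_le (hθ : ConvexOn ℝ (Ici 0) θ)
    (hθnn : ∀ s, 0 ≤ s → 0 ≤ θ s) (hk : 0 < k) (hΔ : ∀ t, 0 ≤ t → θ (2 * t) ≤ k * θ t)
    {δ : ℝ} (hδ0 : 0 < δ) (hδ1 : δ ≤ 1) :
    ∃ δ' : ℝ, 0 < δ' ∧ δ' < 1 ∧ ∀ u : T → ℝ,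
      orliczModular θ μ u ≤ ENNReal.ofReal (1 - δ) → luxNorm θ μ u ≤ ENNReal.ofReal (1 - δ') := by
  set a := min 1 (δ / k)
  have ha0 : 0 < a := lt_min one_pos (div_pos hδ0 hk)
  have hak : a * k ≤ δ := (le_div_iff₀ hk).1 (min_le_right _ _)
  have ha1 : a / (1 + a) < 1 := (div_lt_one (by positivity)).2 (by linarith)
  refine ⟨a / (1 + a), by positivity, ha1, fun u hu => luxNorm_le_ofReal (sub_pos.2 ha1) ?_⟩
  have hinv : (1 - a / (1 + a))⁻¹ = 1 + a := by field_simp; ring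
  calc orliczModular θ μ ((1 - a / (1 + a))⁻¹ • u)
      ≤ ENNReal.ofReal (1 + a * k) * orliczModular θ μ u := by
        rw [hinv]
        exact orliczModular_smul_le (by positivity) (by positivity) (fun s hs => by
          simpa using hθ.map_mul_le_of_delta2 (a := 1 + a) (hθnn s hs) hΔ (by linarith)
            (by linarith [min_le_left 1 (δ / k)]) hs) _
    _ ≤ ENNReal.ofReal (1 + a * k) * ENNReal.ofReal (1 - δ) := mul_le_mul_right hu _
    _ ≤ 1 := by
        rw [← ENNReal.ofReal_mul (by positivity)]
        exact ENNReal.ofReal_le_one.2 (by nlinarith)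

lemma orliczModular_eq_one_of_luxNorm_eq_one (hθ : ConvexOn ℝ (Ici 0) θ) (hθ0 : θ 0 = 0)
    (hθnn : ∀ s, 0 ≤ s → 0 ≤ θ s) (hk : 0 < k) (hΔ : ∀ t, 0 ≤ t → θ (2 * t) ≤ k * θ t)
    (h : luxNorm θ μ u = 1) : orliczModular θ μ u = 1 := by
  refine le_antisymm (orliczModular_le_one_of_luxNorm_le_one hθ hθ0 hθnn hk hΔ h.le)
    (not_lt.1 fun hlt => ?_)
  obtain ⟨b, hb0, hub, hb1⟩ := ENNReal.lt_iff_exists_real_btwn.1 hlt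
  have hb1' : b < 1 := by simpa using hb1
  obtain ⟨δ', hδ'0, -, hδ'⟩ :=
    exists_luxNorm_le_of_orliczModular_le (μ := μ) hθ hθnn hk hΔ (sub_pos.2 hb1') (by linarith)
  have := (hδ' u (by simpa using hub.le)).trans_lt
    (ENNReal.ofReal_lt_one.2 (by linarith))
  simp [h] at this

lemma exists_ofReal_le_orliczModular_of_ofReal_le_luxNorm (hθ : ConvexOn ℝ (Ici 0) θ)
    (hθ0 : θ 0 = 0) (hθnn : ∀ s, 0 ≤ s → 0 ≤ θ s) (hk : 0 < k)
    (hΔ : ∀ t, 0 ≤ t → θ (2 * t) ≤ k * θ t) {ε : ℝ} (hε : 0 < ε) :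
    ∃ η : ℝ, 0 < η ∧ ∀ u : T → ℝ,
      ENNReal.ofReal ε ≤ luxNorm θ μ u → ENNReal.ofReal η ≤ orliczModular θ μ u := by
  obtain ⟨m, hm⟩ := pow_unbounded_of_one_lt (ε / 2)⁻¹ one_lt_two
  refine ⟨(k ^ m)⁻¹, by positivity, fun u hu => not_lt.1 fun hlt => ?_⟩
  have hscaled : orliczModular θ μ ((ε / 2)⁻¹ • u) ≤ 1 := calc
    _ ≤ ENNReal.ofReal (k ^ m) * orliczModular θ μ u :=
        orliczModular_smul_le (by positivity) (by positivity)
          (fun s hs => hθ.map_mul_le_pow_of_delta2 hθ0 hθnn hk.le hΔ (by positivity) hm.le hs) _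
    _ ≤ ENNReal.ofReal (k ^ m) * ENNReal.ofReal (k ^ m)⁻¹ := mul_le_mul_right hlt.le _
    _ = 1 := by rw [← ENNReal.ofReal_mul (by positivity), mul_inv_cancel₀ (by positivity),
        ENNReal.ofReal_one]
  have := hu.trans (luxNorm_le_ofReal (by positivity) hscaled)
  rw [ENNReal.ofReal_le_ofReal_iff (by positivity)] at this
  linarith

end Modular

section LocallyUniformlyConvex

variable {T : Type*} [MeasurableSpace T] {μ : Measure T} {θ : ℝ → ℝ} {k : ℝ}

lemma LocallyUniformlyConvex.orliczModular_of_luxNorm (hθ : ConvexOn ℝ (Ici 0) θ)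
    (hθ0 : θ 0 = 0) (h : LocallyUniformlyConvex (luxNorm θ μ (X := ℝ))) :
    LocallyUniformlyConvex (orliczModular θ μ) := by
  intro f hf hBf ε hε
  obtain ⟨δ, hδ0, hδ1, hδ⟩ := h f hf (luxNorm_eq_one_of_orliczModular_eq_one hθ hθ0 hBf)
    (min ε 1) (lt_min hε one_pos)
  refine ⟨δ / 2, by linarith, by linarith, fun g hg hBg hfg => ?_⟩
  have hfg' : ENNReal.ofReal (min ε 1) ≤ luxNorm θ μ (fun t => f t - g t) :=
    ofReal_le_luxNorm_of_ofReal_le_orliczModular hθ hθ0 (min_le_right _ _)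
      ((ENNReal.ofReal_le_ofReal (min_le_left _ _)).trans hfg)
  have hmid := hδ g hg (luxNorm_eq_one_of_orliczModular_eq_one hθ hθ0 hBg) hfg'
  exact (orliczModular_lt_of_luxNorm_lt hθ hθ0 (by linarith) (hmid.trans_lt
    ((ENNReal.ofReal_lt_ofReal_iff (by linarith)).2 (by linarith)))).le

lemma LocallyUniformlyConvex.luxNorm_of_orliczModular (hθ : ConvexOn ℝ (Ici 0) θ)
    (hθ0 : θ 0 = 0) (hθnn : ∀ s, 0 ≤ s → 0 ≤ θ s) (hk : 0 < k)
    (hΔ : ∀ t, 0 ≤ t → θ (2 * t) ≤ k * θ t) (h : LocallyUniformlyConvex (orliczModular θ μ)) :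
    LocallyUniformlyConvex (luxNorm θ μ (X := ℝ)) := by
  intro f hf hNf ε hε
  obtain ⟨η, hη, hBη⟩ :=
    exists_ofReal_le_orliczModular_of_ofReal_le_luxNorm (μ := μ) hθ hθ0 hθnn hk hΔ hε
  obtain ⟨δ, hδ0, hδ1, hδ⟩ :=
    h f hf (orliczModular_eq_one_of_luxNorm_eq_one hθ hθ0 hθnn hk hΔ hNf) η hη
  obtain ⟨δ', hδ'0, hδ'1, hδ'⟩ :=
    exists_luxNorm_le_of_orliczModular_le (μ := μ) hθ hθnn hk hΔ hδ0 hδ1.le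
  exact ⟨δ', hδ'0, hδ'1, fun g hg hNg hfg => hδ' _ (hδ g hg
    (orliczModular_eq_one_of_luxNorm_eq_one hθ hθ0 hθnn hk hΔ hNg) (hBη _ hfg))⟩

end LocallyUniformlyConvex

theorem luxNorm_locallyUniformlyConvex_iff_modular_general {T : Type*} [MeasurableSpace T]
    (μ : Measure T)
    (θ : ℝ → ℝ) (hθ : IsYoungFunction θ) (hΔ : Delta2 θ) :
    ((∀ f : T → ℝ, Measurable f → luxNorm θ μ f = 1 →
        ∀ ε : ℝ, 0 < ε → ∃ δ : ℝ, 0 < δ ∧ δ < 1 ∧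
          ∀ g : T → ℝ, Measurable g → luxNorm θ μ g = 1 →
            ENNReal.ofReal ε ≤ luxNorm θ μ (fun t => f t - g t) →
            luxNorm θ μ (fun t => (f t + g t) / 2) ≤ ENNReal.ofReal (1 - δ)) ↔
      (∀ f : T → ℝ, Measurable f → (∫⁻ t, ENNReal.ofReal (θ |f t|) ∂μ) = 1 →
        ∀ ε : ℝ, 0 < ε → ∃ δ : ℝ, 0 < δ ∧ δ < 1 ∧
          ∀ g : T → ℝ, Measurable g → (∫⁻ t, ENNReal.ofReal (θ |g t|) ∂μ) = 1 →
            ENNReal.ofReal ε ≤ (∫⁻ t, ENNReal.ofReal (θ |f t - g t|) ∂μ) →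
            (∫⁻ t, ENNReal.ofReal (θ (|(f t + g t) / 2|)) ∂μ) ≤ ENNReal.ofReal (1 - δ))) := by
  obtain ⟨k, hk, hΔ⟩ := hΔ
  have hθnn : ∀ s, 0 ≤ s → 0 ≤ θ s := fun _ => hθ.nonneg
  exact ⟨LocallyUniformlyConvex.orliczModular_of_luxNorm hθ.convexOn hθ.map_zero,
    LocallyUniformlyConvex.luxNorm_of_orliczModular hθ.convexOn hθ.map_zero hθnn hk hΔ⟩

/-- For a non-atomic finite measure and a Young function satisfying Δ₂, the Luxemburg norm
is locally uniformly convex iff the modular `B(f) = ∫ θ(|f|) dμ` is locally uniformly convex. -/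
theorem luxNorm_locallyUniformlyConvex_iff_modular {T : Type*} [MeasurableSpace T]
    (μ : Measure T) [IsFiniteMeasure μ]
    (hatomless : ∀ E : Set T, MeasurableSet E → 0 < μ E →
      ∃ F, F ⊆ E ∧ MeasurableSet F ∧ 0 < μ F ∧ μ F < μ E)
    (θ : ℝ → ℝ) (hθ : IsYoungFunction θ) (hΔ : Delta2 θ) :
    ((∀ f : T → ℝ, Measurable f → luxNorm θ μ f = 1 →
        ∀ ε : ℝ, 0 < ε → ∃ δ : ℝ, 0 < δ ∧ δ < 1 ∧
          ∀ g : T → ℝ, Measurable g → luxNorm θ μ g = 1 →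
            ENNReal.ofReal ε ≤ luxNorm θ μ (fun t => f t - g t) →
            luxNorm θ μ (fun t => (f t + g t) / 2) ≤ ENNReal.ofReal (1 - δ)) ↔
      (∀ f : T → ℝ, Measurable f → (∫⁻ t, ENNReal.ofReal (θ |f t|) ∂μ) = 1 →
        ∀ ε : ℝ, 0 < ε → ∃ δ : ℝ, 0 < δ ∧ δ < 1 ∧
          ∀ g : T → ℝ, Measurable g → (∫⁻ t, ENNReal.ofReal (θ |g t|) ∂μ) = 1 →
            ENNReal.ofReal ε ≤ (∫⁻ t, ENNReal.ofReal (θ |f t - g t|) ∂μ) →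
            (∫⁻ t, ENNReal.ofReal (θ (|(f t + g t) / 2|)) ∂μ) ≤ ENNReal.ofReal (1 - δ))) :=
  luxNorm_locallyUniformlyConvex_iff_modular_general μ θ hθ hΔ
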